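/- For an unnormalized Dicke state |H^N_w⟩ (the sum over all weight-w bit strings of length N of the corresponding basis vectors), and any nonnegative integer t with t ≤ w ≤ N − t, one has the decomposition |H^N_w⟩ = Σ_{s=0}^{t} |H^t_s⟩ ⊗ |H^{N−t}_{w−s}⟩ under the identification (ℂ²)^{⊗N} ≅ (ℂ²)^{⊗t} ⊗ (ℂ²)^{⊗(N−t)}. -/

import Mathlib

/-- Hamming weight of a bit string of length `N`. -/
def hamWeight {N : ℕ} (x : Fin N → Bool) : ℕ :=
  (Finset.univ.filter (fun i => x i = true)).card

/-- Unnormalized Dicke state `|H^N_w⟩`. -/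
noncomputable def dickeH (N w : ℕ) : (Fin N → Bool) → ℂ :=
  fun x => if hamWeight x = w then 1 else 0

/-
Only the summand `s = wt a` of the right-hand side can be nonzero, and it equals
`[wt b = w - wt a]`; since `wt a ≤ t ≤ w`, this is `[wt a + wt b = w] = [wt (a ++ b) = w]`.
-/

lemma hamWeight_le {N : ℕ} (x : Fin N → Bool) : hamWeight x ≤ N :=
  (Finset.card_filter_le _ _).trans_eq (Finset.card_fin N)

lemma hamWeight_append {t n : ℕ} (a : Fin t → Bool) (b : Fin n → Bool) :
    hamWeight (Fin.append a b) = hamWeight a + hamWeight b := by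
  simp only [hamWeight, Finset.card_filter, Fin.sum_univ_add, Fin.append_left, Fin.append_right]

lemma dickeH_append_of_hamWeight_le {t n w : ℕ} (a : Fin t → Bool) (b : Fin n → Bool)
    (ha : hamWeight a ≤ w) :
    dickeH (t + n) w (Fin.append a b) = dickeH n (w - hamWeight a) b := by
  have hiff : hamWeight a + hamWeight b = w ↔ hamWeight b = w - hamWeight a := by omega
  simp only [dickeH, hamWeight_append, hiff]

lemma sum_range_dickeH_mul {t : ℕ} (a : Fin t → Bool) (f : ℕ → ℂ) :
    ∑ s ∈ Finset.range (t + 1), dickeH t s a * f s = f (hamWeight a) := by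
  have ha : hamWeight a ∈ Finset.range (t + 1) := Finset.mem_range_succ_iff.mpr (hamWeight_le a)
  rw [Finset.sum_eq_single_of_mem _ ha fun s _ hs => by simp [dickeH, Ne.symm hs]]
  simp [dickeH]

theorem dickeH_tensor_decomposition_general (t n w : ℕ) (htw : t ≤ w)
    (a : Fin t → Bool) (b : Fin n → Bool) :
    dickeH (t + n) w (Fin.append a b) =
      ∑ s ∈ Finset.range (t + 1), dickeH t s a * dickeH n (w - s) b := by
  rw [sum_range_dickeH_mul a fun s => dickeH n (w - s) b]
  exact dickeH_append_of_hamWeight_le a b ((hamWeight_le a).trans htw)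

/-- `|H^{t+n}_w⟩ = Σ_{s=0}^{t} |H^t_s⟩ ⊗ |H^{n}_{w−s}⟩`, stated
componentwise under the identification of a length-`t+n` bit string with the
pair of its first `t` bits and last `n` bits (`n = N − t`). -/
theorem dickeH_tensor_decomposition (t n w : ℕ) (htw : t ≤ w) (hwn : w ≤ n)
    (a : Fin t → Bool) (b : Fin n → Bool) :
    dickeH (t + n) w (Fin.append a b) =
      ∑ s ∈ Finset.range (t + 1), dickeH t s a * dickeH n (w - s) b :=
  dickeH_tensor_decomposition_general t n w htw a b
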